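/- arXiv:1912.06307 — 2 statements merged into one kernel-verified Lean document; each statement's English description precedes it below -/
import Mathlib

section
/- Let K: R → [−1,1] satisfy K(0) = 1 and |K(0) − K(x)| ≤ L|x|^ς for all |x| < ε, for some L, ε, ς > 0. Let (Γ_k)_{k∈Z} be a family of real p×p matrices with ∑_{k∈Z} |k|^ς ‖Γ_k‖ ≤ D_1 (Frobenius norm). Then for any M_T ≥ 1 and T ≥ 1, ‖∑_{|k|<T} K(k/M_T)·((T−|k|)/T)·Γ_k − ∑_{k∈Z} Γ_k‖ ≤ D_1 L / M_T^ς + 2 D_1/(ε^ς M_T^ς) + D_1 / T^{min(ς,1)}. -/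
open Finset

/-- Deterministic bias bound for the kernel-smoothed long-run variance:
`‖∑_{|k|<T} K(k/M)((T−|k|)/T) Γ_k − ∑_k Γ_k‖ ≤ D₁L/Mᶳ + 2D₁/(εᶳMᶳ) + D₁/T^{min(ς,1)}`. -/
theorem hac_bias_bound {E : Type*} [NormedAddCommGroup E] [NormedSpace ℝ E]
    (K : ℝ → ℝ) (hKbdd : ∀ x, |K x| ≤ 1) (hK0 : K 0 = 1)
    (L ε ς : ℝ) (hL : 0 < L) (hε : 0 < ε) (hς : 0 < ς)
    (hKsmooth : ∀ x : ℝ, |x| < ε → |K 0 - K x| ≤ L * |x| ^ ς)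
    (Γ : ℤ → E) (D1 : ℝ)
    (hΓsum : Summable Γ)
    (hwsum : Summable (fun k : ℤ => |(k : ℝ)| ^ ς * ‖Γ k‖))
    (hD1 : ∑' k : ℤ, |(k : ℝ)| ^ ς * ‖Γ k‖ ≤ D1)
    (M : ℝ) (hM : 1 ≤ M) (T : ℕ) (hT : 1 ≤ T) :
    ‖(∑ k ∈ Finset.Ioo (-(T : ℤ)) (T : ℤ),
        (K ((k : ℝ) / M) * (((T : ℝ) - |(k : ℝ)|) / T)) • Γ k) - ∑' k : ℤ, Γ k‖
      ≤ D1 * L / M ^ ς + 2 * D1 / (ε ^ ς * M ^ ς) + D1 / (T : ℝ) ^ (min ς 1) := by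
  classical
  set MT := min ς 1 with hMTdef
  have hς0 : 0 ≤ ς := hς.le
  have hM0 : (0:ℝ) < M := lt_of_lt_of_le one_pos hM
  have hMς : (0:ℝ) < M ^ ς := Real.rpow_pos_of_pos hM0 ς
  have hες : (0:ℝ) < ε ^ ς := Real.rpow_pos_of_pos hε ς
  have hT1 : (1:ℝ) ≤ (T:ℝ) := by exact_mod_cast hT
  have hT0 : (0:ℝ) < (T:ℝ) := lt_of_lt_of_le one_pos hT1
  have hMT0 : 0 < MT := lt_min hς one_pos
  have hTMT : (0:ℝ) < (T:ℝ) ^ MT := Real.rpow_pos_of_pos hT0 MT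
  set C := L / M ^ ς + 2 / (ε ^ ς * M ^ ς) + 1 / (T:ℝ) ^ MT with hCdef
  have hC0 : 0 ≤ C := by positivity
  -- auxiliary division lemma
  have hdiv : ∀ a b : ℝ, 1 ≤ a → a ≤ b → a / b ≤ a ^ ς / b ^ MT := by
    intro a b ha hab
    have hb1 : (1:ℝ) ≤ b := ha.trans hab
    have hb0 : (0:ℝ) < b := lt_of_lt_of_le one_pos hb1
    have ha0 : (0:ℝ) < a := lt_of_lt_of_le one_pos ha
    rcases le_total ς 1 with h | h
    · have hmt : MT = ς := min_eq_left h
      rw [hmt]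
      have hx0 : 0 < a / b := div_pos ha0 hb0
      have hx1 : a / b ≤ 1 := (div_le_one hb0).2 hab
      calc a / b = (a / b) ^ (1:ℝ) := (Real.rpow_one _).symm
        _ ≤ (a / b) ^ ς := Real.rpow_le_rpow_of_exponent_ge hx0 hx1 h
        _ = a ^ ς / b ^ ς := Real.div_rpow ha0.le hb0.le ς
    · have hmt : MT = 1 := min_eq_right h
      rw [hmt, Real.rpow_one]
      have haa : a ≤ a ^ ς := by
        calc a = a ^ (1:ℝ) := (Real.rpow_one _).symm
          _ ≤ a ^ ς := Real.rpow_le_rpow_of_exponent_le ha h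
      gcongr
  -- the weight function
  set w : ℤ → ℝ := fun k =>
    if k ∈ Finset.Ioo (-(T:ℤ)) (T:ℤ) then K ((k:ℝ) / M) * (((T:ℝ) - |(k:ℝ)|) / T) else 0
    with hw
  -- key pointwise bound
  have key : ∀ k : ℤ, |w k - 1| ≤ C * |(k:ℝ)| ^ ς := by
    intro k
    set a := |(k:ℝ)| with ha
    have ha0 : 0 ≤ a := abs_nonneg _
    have haς : 0 ≤ a ^ ς := Real.rpow_nonneg ha0 ς
    by_cases hk : k ∈ Finset.Ioo (-(T:ℤ)) (T:ℤ)
    · by_cases hk0 : k = 0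
      · subst hk0
        have hw0 : w 0 = 1 := by
          rw [hw]
          simp only [hk, if_true, Int.cast_zero, zero_div, hK0, abs_zero, sub_zero,
            div_self hT0.ne', one_mul]
        rw [hw0, ha]
        simp [Real.zero_rpow hς.ne']
      · have hkZ : (1:ℤ) ≤ |k| := Int.one_le_abs (by exact_mod_cast hk0)
        have ha1 : (1:ℝ) ≤ a := by
          rw [ha, ← Int.cast_abs]
          exact_mod_cast hkZ
        have hkT : a < (T:ℝ) := by
          rw [Finset.mem_Ioo] at hk
          rw [ha, abs_lt]
          constructor
          · exact_mod_cast hk.1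
          · exact_mod_cast hk.2
        have h2 : a / T ≤ a ^ ς / (T:ℝ) ^ MT := hdiv a T ha1 hkT.le
        have hr0 : 0 ≤ ((T:ℝ) - a) / T := div_nonneg (by linarith) hT0.le
        have hr1 : ((T:ℝ) - a) / T ≤ 1 := by
          rw [div_le_one hT0]; linarith
        have hxabs : |(k:ℝ) / M| = a / M := by
          rw [abs_div, abs_of_pos hM0, ha]
        have hK1 : |K ((k:ℝ) / M) - 1| ≤ L * a ^ ς / M ^ ς + 2 * a ^ ς / (ε ^ ς * M ^ ς) := by
          by_cases hx : |(k:ℝ) / M| < ε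
          · have h := hKsmooth _ hx
            rw [hK0, abs_sub_comm] at h
            have hxp : |(k:ℝ)/M| ^ ς = a ^ ς / M ^ ς := by
              rw [hxabs, Real.div_rpow ha0 hM0.le]
            have h2' : 0 ≤ 2 * a ^ ς / (ε ^ ς * M ^ ς) := by positivity
            calc |K ((k:ℝ)/M) - 1| ≤ L * (a ^ ς / M ^ ς) := by rw [← hxp]; exact h
              _ ≤ L * a ^ ς / M ^ ς + 2 * a ^ ς / (ε ^ ς * M ^ ς) := by
                  rw [mul_div_assoc]; linarith
          · push_neg at hx
            have hεM : ε * M ≤ a := by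
              rw [hxabs, le_div_iff₀ hM0] at hx
              linarith
            have hεMς : ε ^ ς * M ^ ς ≤ a ^ ς := by
              rw [← Real.mul_rpow hε.le hM0.le]
              exact Real.rpow_le_rpow (by positivity) hεM hς0
            have h1 : (1:ℝ) ≤ a ^ ς / (ε ^ ς * M ^ ς) := by
              rw [le_div_iff₀ (by positivity)]; linarith
            have hKb : |K ((k:ℝ)/M) - 1| ≤ 2 := by
              have := hKbdd ((k:ℝ)/M)
              have habs : |K ((k:ℝ)/M) - 1| ≤ |K ((k:ℝ)/M)| + |(1:ℝ)| := abs_sub _ _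
              simp at habs
              linarith
            have h1' : 0 ≤ L * a ^ ς / M ^ ς := by positivity
            have h2eq : 2 * a ^ ς / (ε ^ ς * M ^ ς) = 2 * (a ^ ς / (ε ^ ς * M ^ ς)) := by
              ring
            linarith
        have heq : w k - 1 = (K ((k:ℝ)/M) - 1) * (((T:ℝ) - a) / T) - a / T := by
          rw [hw]
          simp only [hk, if_true]
          rw [ha]
          field_simp
          ring
        have habs2 : |w k - 1| ≤ |K ((k:ℝ)/M) - 1| * (((T:ℝ) - a) / T) + a / T := by
          rw [heq]
          calc |(K ((k:ℝ)/M) - 1) * (((T:ℝ) - a) / T) - a / T|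
              ≤ |(K ((k:ℝ)/M) - 1) * (((T:ℝ) - a) / T)| + |a / T| := abs_sub _ _
            _ = |K ((k:ℝ)/M) - 1| * (((T:ℝ) - a) / T) + a / T := by
                rw [abs_mul, abs_of_nonneg hr0, abs_of_nonneg (div_nonneg ha0 hT0.le)]
        have hmr : |K ((k:ℝ)/M) - 1| * (((T:ℝ) - a) / T) ≤ |K ((k:ℝ)/M) - 1| :=
          mul_le_of_le_one_right (abs_nonneg _) hr1
        have hfinal : C * a ^ ς
            = L * a ^ ς / M ^ ς + 2 * a ^ ς / (ε ^ ς * M ^ ς) + a ^ ς / (T:ℝ) ^ MT := by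
          rw [hCdef]; ring
        clear_value a C
        linarith
    · -- |k| ≥ T
      have hwk : w k = 0 := by rw [hw]; simp [hk]
      have hka : (T:ℝ) ≤ a := by
        rw [Finset.mem_Ioo, not_and_or, not_lt, not_lt] at hk
        have hZ : (T:ℤ) ≤ |k| := by
          rcases hk with h | h
          · exact le_abs.2 (Or.inr (by linarith))
          · exact le_abs.2 (Or.inl h)
        rw [ha, ← Int.cast_abs]
        exact_mod_cast hZ
      have hTς : (T:ℝ) ^ MT ≤ a ^ ς := by
        calc (T:ℝ) ^ MT ≤ (T:ℝ) ^ ς :=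
              Real.rpow_le_rpow_of_exponent_le hT1 (min_le_left _ _)
          _ ≤ a ^ ς := Real.rpow_le_rpow hT0.le hka hς0
      have h1 : (1:ℝ) ≤ a ^ ς / (T:ℝ) ^ MT := by
        rw [le_div_iff₀ hTMT]; linarith
      have hfinal : C * a ^ ς
          = L * a ^ ς / M ^ ς + 2 * a ^ ς / (ε ^ ς * M ^ ς) + a ^ ς / (T:ℝ) ^ MT := by
        rw [hCdef]; ring
      have h1' : 0 ≤ L * a ^ ς / M ^ ς := by positivity
      have h2' : 0 ≤ 2 * a ^ ς / (ε ^ ς * M ^ ς) := by positivity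
      rw [hwk]
      simp only [zero_sub, abs_neg, abs_one]
      clear_value a C
      linarith
  -- summability and rewriting
  have hwz : ∀ k ∉ Finset.Ioo (-(T:ℤ)) (T:ℤ), w k • Γ k = 0 := by
    intro k hk; rw [hw]; simp [hk]
  have hsum_w : Summable (fun k : ℤ => w k • Γ k) :=
    summable_of_ne_finset_zero hwz
  have hfin : ∑ k ∈ Finset.Ioo (-(T:ℤ)) (T:ℤ),
      (K ((k:ℝ) / M) * (((T:ℝ) - |(k:ℝ)|) / T)) • Γ k = ∑' k : ℤ, w k • Γ k := by
    rw [tsum_eq_sum hwz]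
    refine Finset.sum_congr rfl (fun k hk => ?_)
    rw [hw]; simp [hk]
  have hdiff : (∑' k : ℤ, w k • Γ k) - ∑' k : ℤ, Γ k = ∑' k : ℤ, (w k - 1) • Γ k := by
    rw [← Summable.tsum_sub hsum_w hΓsum]
    refine tsum_congr (fun k => ?_)
    rw [sub_smul, one_smul]
  have hnorm : ∀ k : ℤ, ‖(w k - 1) • Γ k‖ ≤ C * (|(k:ℝ)| ^ ς * ‖Γ k‖) := by
    intro k
    rw [norm_smul, Real.norm_eq_abs]
    calc |w k - 1| * ‖Γ k‖ ≤ (C * |(k:ℝ)| ^ ς) * ‖Γ k‖ :=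
          mul_le_mul_of_nonneg_right (key k) (norm_nonneg _)
      _ = C * (|(k:ℝ)| ^ ς * ‖Γ k‖) := by ring
  have hsumb : Summable (fun k : ℤ => C * (|(k:ℝ)| ^ ς * ‖Γ k‖)) := hwsum.mul_left C
  have hbound : ‖∑' k : ℤ, (w k - 1) • Γ k‖ ≤ ∑' k : ℤ, C * (|(k:ℝ)| ^ ς * ‖Γ k‖) :=
    tsum_of_norm_bounded hsumb.hasSum hnorm
  have hmul : ∑' k : ℤ, C * (|(k:ℝ)| ^ ς * ‖Γ k‖) = C * ∑' k : ℤ, |(k:ℝ)| ^ ς * ‖Γ k‖ :=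
    tsum_mul_left
  have hfinal : C * D1 = D1 * L / M ^ ς + 2 * D1 / (ε ^ ς * M ^ ς) + D1 / (T:ℝ) ^ MT := by
    rw [hCdef]; ring
  calc ‖(∑ k ∈ Finset.Ioo (-(T:ℤ)) (T:ℤ),
        (K ((k:ℝ) / M) * (((T:ℝ) - |(k:ℝ)|) / T)) • Γ k) - ∑' k : ℤ, Γ k‖
      = ‖∑' k : ℤ, (w k - 1) • Γ k‖ := by rw [hfin, hdiff]
    _ ≤ ∑' k : ℤ, C * (|(k:ℝ)| ^ ς * ‖Γ k‖) := hbound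
    _ = C * ∑' k : ℤ, |(k:ℝ)| ^ ς * ‖Γ k‖ := hmul
    _ ≤ C * D1 := mul_le_mul_of_nonneg_left hD1 hC0
    _ = D1 * L / M ^ ς + 2 * D1 / (ε ^ ς * M ^ ς) + D1 / (T:ℝ) ^ MT := hfinal
end

section
/- Let (ξ_t)_{t∈Z} be a centered stationary real process with ‖ξ_0‖_q < ∞ for some q > 2, and let γ_t = ‖E(ξ_t | M_0) − E(ξ_t)‖_1 where M_0 = σ(ξ_0, ξ_{−1}, ...). Then |Cov(ξ_0, ξ_t)| ≤ γ_t^{(q−2)/(q−1)} · ‖ξ_0‖_q^{q/(q−1)}. -/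
/-!
Since `ξ₀` is `M₀`-measurable, `Cov(ξ₀, ξ_t) = E[ξ₀ Y]` with `Y = E[ξ_t | M₀]`. Hölder's inequality
with exponents `q - 1` and `(q - 1)/(q - 2)` for the measure `|Y| dP` gives
`E|ξ₀ Y| ≤ E[|ξ₀|^(q-1) |Y|]^(1/(q-1)) · E|Y|^((q-2)/(q-1))`. As `|Y| ≤ E[|ξ_t| | M₀]` and
`|ξ₀|^(q-1)` is `M₀`-measurable, `E[|ξ₀|^(q-1) |Y|] ≤ E[|ξ₀|^(q-1) |ξ_t|] ≤ ‖ξ₀‖_q^(q-1) ‖ξ_t‖_q`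
by Hölder again, and stationarity gives `‖ξ_t‖_q = ‖ξ₀‖_q`.
-/

open MeasureTheory ProbabilityTheory
open scoped ENNReal

/-- Hölder's inequality for `f` and `1` with respect to the measure `g • μ`. -/
theorem ENNReal.lintegral_mul_le_Lp_weighted
    {α : Type*} [MeasurableSpace α] {μ : Measure α} {p r : ℝ} (hpr : p.HolderConjugate r)
    {f g : α → ℝ≥0∞} (hf : AEMeasurable f μ) (hg : AEMeasurable g μ) :
    ∫⁻ a, f a * g a ∂μ ≤ (∫⁻ a, f a ^ p * g a ∂μ) ^ (1 / p) * (∫⁻ a, g a ∂μ) ^ (1 / r) := by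
  have hsplit : ∀ a, f a * g a = (f a ^ p * g a) ^ (1 / p) * g a ^ (1 / r) := fun a ↦ by
    rw [ENNReal.mul_rpow_of_nonneg _ _ (by simp [hpr.nonneg]), ← ENNReal.rpow_mul,
      mul_one_div_cancel hpr.ne_zero, ENNReal.rpow_one, mul_assoc,
      ← ENNReal.rpow_add_of_nonneg _ _ (by simp [hpr.nonneg]) (by simp [hpr.symm.nonneg]),
      one_div, one_div, hpr.inv_add_inv_eq_one, ENNReal.rpow_one]
  simp_rw [hsplit]
  exact ENNReal.lintegral_mul_norm_pow_le ((hf.pow_const p).mul hg) hg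
    (by simp [hpr.nonneg]) (by simp [hpr.symm.nonneg]) (by simp [hpr.inv_add_inv_eq_one])

namespace MeasureTheory

variable {Ω : Type*} {m mΩ : MeasurableSpace Ω} {μ : Measure[mΩ] Ω}

theorem lintegral_mul_condLExp (hm : m ≤ mΩ) [SigmaFinite (μ.trim hm)] {W g : Ω → ℝ≥0∞}
    (hW : Measurable[m] W) (hg : AEMeasurable g μ) :
    ∫⁻ a, W a * μ⁻[g|m] a ∂μ = ∫⁻ a, W a * g a ∂μ := by
  have hdensity : (μ.trim hm).withDensity μ⁻[g|m] = (μ.withDensity g).trim hm := by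
    refine @Measure.ext _ m _ _ fun s hs ↦ ?_
    rw [withDensity_apply _ hs, trim_measurableSet_eq hm hs, withDensity_apply _ (hm s hs),
      setLIntegral_condLExp_trim (hm := hm) μ g hs]
  calc ∫⁻ a, W a * μ⁻[g|m] a ∂μ = ∫⁻ a, W a ∂(μ.trim hm).withDensity μ⁻[g|m] := by
        rw [lintegral_withDensity_eq_lintegral_mul _ (measurable_condLExp _ _ _) hW,
          lintegral_trim hm ((measurable_condLExp _ _ _).mul hW)]
        simp only [Pi.mul_apply, mul_comm]
    _ = ∫⁻ a, W a * g a ∂μ := by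
        rw [hdensity, lintegral_trim hm hW,
          lintegral_withDensity_eq_lintegral_mul₀ hg (hW.mono hm le_rfl).aemeasurable]
        simp only [Pi.mul_apply, mul_comm]

theorem lintegral_mul_enorm_condExp_le (hm : m ≤ mΩ) [SigmaFinite (μ.trim hm)]
    {W : Ω → ℝ≥0∞} (hW : Measurable[m] W) {Z : Ω → ℝ} (hZ : Integrable Z μ) :
    ∫⁻ a, W a * ‖μ[Z|m] a‖ₑ ∂μ ≤ ∫⁻ a, W a * ‖Z a‖ₑ ∂μ := by
  have hjensen : ∀ᵐ a ∂μ, ‖μ[Z|m] a‖ₑ ≤ μ⁻[fun a ↦ ‖|Z a|‖ₑ|m] a := by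
    filter_upwards [abs_condExp_ae_le_condExp_abs (m := m) (μ := μ) Z,
      condLExp_enorm m hZ.abs (ae_of_all _ fun a ↦ abs_nonneg (Z a))] with a ha hLExp
    rw [hLExp, Real.enorm_eq_ofReal_abs, Real.enorm_eq_ofReal_abs]
    exact ENNReal.ofReal_le_ofReal (ha.trans (le_abs_self _))
  calc ∫⁻ a, W a * ‖μ[Z|m] a‖ₑ ∂μ ≤ ∫⁻ a, W a * μ⁻[fun a ↦ ‖|Z a|‖ₑ|m] a ∂μ :=
        lintegral_mono_ae (hjensen.mono fun a ha ↦ by gcongr)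
    _ = ∫⁻ a, W a * ‖Z a‖ₑ ∂μ := by
        rw [lintegral_mul_condLExp hm hW hZ.abs.aemeasurable.enorm]
        simp only [Real.enorm_abs]

theorem lintegral_enorm_mul_condExp_le_eLpNorm' (hm : m ≤ mΩ) [SigmaFinite (μ.trim hm)]
    {X Z : Ω → ℝ} (hX : Measurable[m] X) (hZ : Integrable Z μ) {q : ℝ} (hq : 2 < q) :
    ∫⁻ a, ‖X a‖ₑ * ‖μ[Z|m] a‖ₑ ∂μ ≤ (eLpNorm' Z q μ * eLpNorm' X q μ ^ (q - 1)) ^ (1 / (q - 1)) *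
      (∫⁻ a, ‖μ[Z|m] a‖ₑ ∂μ) ^ ((q - 2) / (q - 1)) := by
  have hq₁ : 0 < q - 1 := by linarith
  have hconj₁ : (q - 1).HolderConjugate ((q - 1) / (q - 2)) :=
    (Real.holderConjugate_iff_eq_conjExponent (by linarith)).2 (by ring_nf)
  have hconj₂ : q.HolderConjugate (q / (q - 1)) :=
    (Real.holderConjugate_iff_eq_conjExponent (by linarith)).2 rfl
  have hHolder : ∫⁻ a, ‖X a‖ₑ ^ (q - 1) * ‖Z a‖ₑ ∂μ ≤
      eLpNorm' Z q μ * eLpNorm' X q μ ^ (q - 1) := by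
    have h := ENNReal.lintegral_mul_rpow_le_lintegral_rpow_mul_lintegral_rpow hconj₂
      hZ.aemeasurable.enorm (hX.mono hm le_rfl).enorm.aemeasurable
    rw [eLpNorm', eLpNorm', ← ENNReal.rpow_mul, one_div_mul_eq_div]
    rw [one_div_div] at h
    exact (lintegral_congr fun a ↦ mul_comm _ _).trans_le h
  calc ∫⁻ a, ‖X a‖ₑ * ‖μ[Z|m] a‖ₑ ∂μ
      ≤ (∫⁻ a, ‖X a‖ₑ ^ (q - 1) * ‖μ[Z|m] a‖ₑ ∂μ) ^ (1 / (q - 1)) *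
          (∫⁻ a, ‖μ[Z|m] a‖ₑ ∂μ) ^ (1 / ((q - 1) / (q - 2))) :=
        ENNReal.lintegral_mul_le_Lp_weighted hconj₁ (hX.mono hm le_rfl).enorm.aemeasurable
          (integrable_condExp (m := m)).aemeasurable.enorm
    _ ≤ (∫⁻ a, ‖X a‖ₑ ^ (q - 1) * ‖Z a‖ₑ ∂μ) ^ (1 / (q - 1)) *
          (∫⁻ a, ‖μ[Z|m] a‖ₑ ∂μ) ^ (1 / ((q - 1) / (q - 2))) := by
        gcongr ?_ ^ _ * _
        exact lintegral_mul_enorm_condExp_le hm ((measurable_enorm.comp hX).pow_const (q - 1)) hZ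
    _ ≤ _ := by
        rw [one_div_div]
        gcongr

theorem integral_mul_condExp (hm : m ≤ mΩ) [SigmaFinite (μ.trim hm)] {X Z : Ω → ℝ}
    (hX : StronglyMeasurable[m] X) (hXZ : Integrable (X * Z) μ) (hZ : Integrable Z μ) :
    ∫ a, X a * μ[Z|m] a ∂μ = ∫ a, X a * Z a ∂μ :=
  (integral_congr_ae (condExp_mul_of_stronglyMeasurable_left hX hXZ hZ).symm).trans
    (integral_condExp hm)

theorem enorm_integral_mul_le_of_eLpNorm'_le (hm : m ≤ mΩ) [SigmaFinite (μ.trim hm)]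
    {X Z : Ω → ℝ} (hX : Measurable[m] X) (hXZ : Integrable (X * Z) μ) (hZ : Integrable Z μ)
    {q : ℝ} (hq : 2 < q) (hZX : eLpNorm' Z q μ ≤ eLpNorm' X q μ) :
    ‖∫ a, X a * Z a ∂μ‖ₑ ≤
      (∫⁻ a, ‖μ[Z|m] a‖ₑ ∂μ) ^ ((q - 2) / (q - 1)) * eLpNorm' X q μ ^ (q / (q - 1)) := by
  have hpow : ∀ x : ℝ≥0∞, (x * x ^ (q - 1)) ^ (1 / (q - 1)) = x ^ (q / (q - 1)) := fun x ↦ by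
    nth_rw 1 [← ENNReal.rpow_one x]
    rw [← ENNReal.rpow_add_of_nonneg _ _ zero_le_one (by linarith), ← ENNReal.rpow_mul]
    ring_nf
  rw [← integral_mul_condExp hm hX.stronglyMeasurable hXZ hZ]
  calc ‖∫ a, X a * μ[Z|m] a ∂μ‖ₑ ≤ ∫⁻ a, ‖X a‖ₑ * ‖μ[Z|m] a‖ₑ ∂μ := by
        simpa only [enorm_mul] using enorm_integral_le_lintegral_enorm (μ := μ) (α := Ω)
          fun a ↦ X a * μ[Z|m] a
    _ ≤ (eLpNorm' Z q μ * eLpNorm' X q μ ^ (q - 1)) ^ (1 / (q - 1)) *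
          (∫⁻ a, ‖μ[Z|m] a‖ₑ ∂μ) ^ ((q - 2) / (q - 1)) :=
        lintegral_enorm_mul_condExp_le_eLpNorm' hm hX hZ hq
    _ ≤ _ := by
        have hq₁ : 0 < q - 1 := by linarith
        grw [hZX, hpow, mul_comm]

theorem abs_integral_mul_le_of_eLpNorm_le [IsFiniteMeasure μ] (hm : m ≤ mΩ) {X Z : Ω → ℝ}
    {q : ℝ} (hq : 2 < q) (hXm : Measurable[m] X) (hX : MemLp X (ENNReal.ofReal q) μ)
    (hZ : MemLp Z (ENNReal.ofReal q) μ)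
    (hZX : eLpNorm Z (ENNReal.ofReal q) μ ≤ eLpNorm X (ENNReal.ofReal q) μ) :
    |∫ a, X a * Z a ∂μ| ≤
      (∫ a, |μ[Z|m] a| ∂μ) ^ ((q - 2) / (q - 1)) *
        ((∫ a, |X a| ^ q ∂μ) ^ (1 / q)) ^ (q / (q - 1)) := by
  have hq₀ : ENNReal.ofReal q ≠ 0 := (ENNReal.ofReal_pos.2 (by linarith)).ne'
  have h2q : (2 : ℝ≥0∞) ≤ ENNReal.ofReal q := by
    rw [← ENNReal.ofReal_ofNat]; exact ENNReal.ofReal_le_ofReal hq.le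
  have heLp : ∀ f : Ω → ℝ, eLpNorm f (ENNReal.ofReal q) μ = eLpNorm' f q μ := fun f ↦ by
    rw [eLpNorm_eq_eLpNorm' hq₀ ENNReal.ofReal_ne_top, ENNReal.toReal_ofReal (by linarith)]
  have hXq : eLpNorm' X q μ = ENNReal.ofReal ((∫ a, |X a| ^ q ∂μ) ^ (1 / q)) := by
    rw [← heLp, hX.eLpNorm_eq_integral_rpow_norm hq₀ ENNReal.ofReal_ne_top,
      ENNReal.toReal_ofReal (by linarith), one_div]
    rfl
  have hZm : ∫⁻ a, ‖μ[Z|m] a‖ₑ ∂μ = ENNReal.ofReal (∫ a, |μ[Z|m] a| ∂μ) :=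
    (ofReal_integral_norm_eq_lintegral_enorm integrable_condExp).symm
  have hbound := enorm_integral_mul_le_of_eLpNorm'_le hm hXm
    ((hX.mono_exponent h2q).integrable_mul (hZ.mono_exponent h2q))
    (hZ.integrable (one_le_two.trans h2q)) hq (by simpa only [heLp] using hZX)
  have hexp₁ : 0 ≤ (q - 2) / (q - 1) := div_nonneg (by linarith) (by linarith)
  have hexp₂ : 0 ≤ q / (q - 1) := div_nonneg (by linarith) (by linarith)
  rw [hZm, hXq, ENNReal.ofReal_rpow_of_nonneg (by positivity) hexp₁,
    ENNReal.ofReal_rpow_of_nonneg (by positivity) hexp₂, ← ENNReal.ofReal_mul (by positivity),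
    Real.enorm_eq_ofReal_abs] at hbound
  exact (ENNReal.ofReal_le_ofReal_iff (by positivity)).1 hbound

end MeasureTheory

namespace ProbabilityTheory

variable {Ω ι β : Type*} [MeasurableSpace Ω] {μ : Measure Ω} [Add ι] [MeasurableSpace β]

theorem identDistrib_of_map_shift_eq {ξ : ι → Ω → β} (hξ : ∀ s, Measurable (ξ s)) {n : ι}
    (hn : μ.map (fun ω s ↦ ξ (s + n) ω) = μ.map (fun ω s ↦ ξ s ω)) (s : ι) :
    IdentDistrib (ξ (s + n)) (ξ s) μ μ :=
  (⟨(measurable_pi_lambda _ fun _ ↦ hξ _).aemeasurable,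
    (measurable_pi_lambda _ fun _ ↦ hξ _).aemeasurable, hn⟩ : IdentDistrib _ _ μ μ).comp
    (measurable_pi_apply s)

end ProbabilityTheory

theorem cov_bound_mixingale_general {Ω : Type*} [m0 : MeasurableSpace Ω]
    (μ : Measure Ω) [IsProbabilityMeasure μ] (ξ : ℤ → Ω → ℝ)
    (hmeas : ∀ s, Measurable (ξ s))
    (q : ℝ) (hq : 2 < q)
    (hLq : Integrable (fun ω => |ξ 0 ω| ^ q) μ)
    (hcentered : ∀ t, ∫ ω, ξ t ω ∂μ = 0)
    (hstat : ∀ n : ℤ, Measure.map (fun ω => fun s : ℤ => ξ (s + n) ω) μ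
      = Measure.map (fun ω => fun s : ℤ => ξ s ω) μ)
    (M : MeasurableSpace Ω)
    (hM : M = ⨆ s : {s : ℤ // s ≤ 0}, MeasurableSpace.comap (ξ s) inferInstance)
    (t : ℤ)
    (γt : ℝ) (hγt : γt = ∫ ω, |(μ[ξ t|M]) ω - ∫ ω', ξ t ω' ∂μ| ∂μ) :
    |(∫ ω, ξ 0 ω * ξ t ω ∂μ) - (∫ ω, ξ 0 ω ∂μ) * ∫ ω, ξ t ω ∂μ|
      ≤ γt ^ ((q - 2) / (q - 1)) *
        ((∫ ω, |ξ 0 ω| ^ q ∂μ) ^ (1 / q)) ^ (q / (q - 1)) := by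
  -- `M` is a local instance too; make the ambient σ-algebra the one found by instance search
  let _ : MeasurableSpace Ω := m0
  have hm : M ≤ m0 := hM ▸ iSup_le fun s ↦ (hmeas s).comap_le
  have hX : Measurable[M] (ξ 0) := measurable_iff_comap_le.2 <| hM ▸
    le_iSup (fun s : {s : ℤ // s ≤ 0} ↦ MeasurableSpace.comap (ξ s) inferInstance) ⟨0, le_rfl⟩
  have hid : IdentDistrib (ξ t) (ξ 0) μ μ := by
    simpa using identDistrib_of_map_shift_eq hmeas (hstat t) 0
  have hLq₀ : MemLp (ξ 0) (ENNReal.ofReal q) μ :=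
    (integrable_norm_rpow_iff (hmeas 0).aestronglyMeasurable
      (ENNReal.ofReal_pos.2 (by linarith)).ne' ENNReal.ofReal_ne_top).1
      (by simpa [ENNReal.toReal_ofReal (by linarith : 0 ≤ q)] using hLq)
  have hγ : γt = ∫ ω, |μ[ξ t|M] ω| ∂μ := by
    simp [hγt, hcentered t]
  rw [hcentered 0, hcentered t, mul_zero, sub_zero, hγ]
  exact abs_integral_mul_le_of_eLpNorm_le hm hq hX hLq₀ (hid.symm.memLp_snd hLq₀)
    (hid.eLpNorm_eq _).le

/-- Covariance inequality (Lemma A.1): for a centered stationary process with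
`‖ξ₀‖_q < ∞`, `q > 2`, and `γ_t = ‖E(ξ_t|M₀) − E ξ_t‖₁` with
`M₀ = σ(ξ₀, ξ₋₁, …)`, one has
`|Cov(ξ₀, ξ_t)| ≤ γ_t^{(q−2)/(q−1)} ‖ξ₀‖_q^{q/(q−1)}`. -/
theorem cov_bound_mixingale {Ω : Type*} [m0 : MeasurableSpace Ω]
    (μ : Measure Ω) [IsProbabilityMeasure μ] (ξ : ℤ → Ω → ℝ)
    (hmeas : ∀ s, Measurable (ξ s))
    (q : ℝ) (hq : 2 < q)
    (hLq : Integrable (fun ω => |ξ 0 ω| ^ q) μ)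
    (hcentered : ∀ t, ∫ ω, ξ t ω ∂μ = 0)
    (hstat : ∀ n : ℤ, Measure.map (fun ω => fun s : ℤ => ξ (s + n) ω) μ
      = Measure.map (fun ω => fun s : ℤ => ξ s ω) μ)
    (M : MeasurableSpace Ω)
    (hM : M = ⨆ s : {s : ℤ // s ≤ 0}, MeasurableSpace.comap (ξ s) inferInstance)
    (t : ℤ) (ht : 0 ≤ t)
    (γt : ℝ) (hγt : γt = ∫ ω, |(μ[ξ t|M]) ω - ∫ ω', ξ t ω' ∂μ| ∂μ)
    (hint : Integrable (fun ω => ξ 0 ω * ξ t ω) μ) :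
    |(∫ ω, ξ 0 ω * ξ t ω ∂μ) - (∫ ω, ξ 0 ω ∂μ) * ∫ ω, ξ t ω ∂μ|
      ≤ γt ^ ((q - 2) / (q - 1)) *
        ((∫ ω, |ξ 0 ω| ^ q ∂μ) ^ (1 / q)) ^ (q / (q - 1)) :=
  cov_bound_mixingale_general (m0 := m0) μ ξ hmeas q hq hLq hcentered hstat M hM t γt hγt
end
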